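/- Let $e, m, r$ be non-negative integers with $e > 0$ and $r < m \le r + e$. Then $\sum_{j=m-r}^{e} (-1)^j \binom{e}{j} \binom{e+m-j-1}{e-1} = (-1)^{m+r} \binom{e+r}{m} \binom{m-1}{r}$, where $\binom{a}{b} = 0$ whenever $a < b$. -/
import Mathlib

open Nat Finset

lemma Kq (c a b : ℕ) :
    ((c+2+b).choose (c+1) : ℚ) * ((c+2+a+b).choose (c+1+b)) =
    ((c+1+a).choose c) * ((c+3+a+b).choose (c+2+a)) +
      ((c+1+a).choose (c+1)) * ((c+2+a+b).choose (c+2+a)) := by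
  rw [Nat.cast_choose ℚ (by omega : c+1 ≤ c+2+b),
      Nat.cast_choose ℚ (by omega : c+1+b ≤ c+2+a+b),
      Nat.cast_choose ℚ (by omega : c ≤ c+1+a),
      Nat.cast_choose ℚ (by omega : c+2+a ≤ c+3+a+b),
      Nat.cast_choose ℚ (by omega : c+1 ≤ c+1+a),
      Nat.cast_choose ℚ (by omega : c+2+a ≤ c+2+a+b)]
  simp only [show c+2+b - (c+1) = b+1 from by omega,
    show c+2+a+b - (c+1+b) = a+1 from by omega,
    show c+1+a - c = a+1 from by omega,
    show c+3+a+b - (c+2+a) = b+1 from by omega,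
    show c+1+a - (c+1) = a from by omega,
    show c+2+a+b - (c+2+a) = b from by omega]
  have e1 : ((c+2+b)! : ℚ) = (c+2+b) * (c+1+b)! := by
    rw [show c+2+b = (c+1+b)+1 from by omega, Nat.factorial_succ]; push_cast; ring
  have e2 : (((c+1))! : ℚ) = (c+1) * (c)! := by
    rw [Nat.factorial_succ]; push_cast; ring
  have e3 : ((b+1)! : ℚ) = (b+1) * (b)! := by rw [Nat.factorial_succ]; push_cast; ring
  have e4 : ((a+1)! : ℚ) = (a+1) * (a)! := by rw [Nat.factorial_succ]; push_cast; ring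
  have e5 : ((c+2+a+b)! : ℚ) = (c+2+a+b) * (c+1+a+b)! := by
    rw [show c+2+a+b = (c+1+a+b)+1 from by omega, Nat.factorial_succ]; push_cast; ring
  have e6 : ((c+3+a+b)! : ℚ) = (c+3+a+b) * ((c+2+a+b) * (c+1+a+b)!) := by
    rw [show c+3+a+b = (c+2+a+b)+1 from by omega, Nat.factorial_succ]; push_cast; rw [e5]; ring
  have e7 : ((c+2+a)! : ℚ) = (c+2+a) * (c+1+a)! := by
    rw [show c+2+a = (c+1+a)+1 from by omega, Nat.factorial_succ]; push_cast; ring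
  rw [e1, e2, e3, e4, e5, e6, e7]
  have n1 : ((c)! : ℚ) ≠ 0 := by positivity
  have n2 : ((a)! : ℚ) ≠ 0 := by positivity
  have n3 : ((b)! : ℚ) ≠ 0 := by positivity
  have n4 : ((c+1+a)! : ℚ) ≠ 0 := by positivity
  have n5 : ((c+1+b)! : ℚ) ≠ 0 := by positivity
  have n6 : ((c+1+a+b)! : ℚ) ≠ 0 := by positivity
  field_simp
  ring

lemma Knat (e m t : ℕ) (hm : 1 ≤ m) (ht1 : 1 ≤ t) (hte : t < e) :
    e.choose t * (e+m-1-t).choose (e-1) =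
      (m-1).choose (t-1) * (e+m-t).choose m + (m-1).choose t * (e+m-1-t).choose m := by
  rcases lt_trichotomy t m with h | rfl | h
  · -- t < m
    obtain ⟨c, rfl⟩ : ∃ c, t = c + 1 := ⟨t-1, by omega⟩
    obtain ⟨a, rfl⟩ : ∃ a, m = c + 2 + a := ⟨m - (c+2), by omega⟩
    obtain ⟨b, rfl⟩ : ∃ b, e = c + 2 + b := ⟨e - (c+2), by omega⟩
    have := Kq c a b
    have h1 : c+2+b + (c+2+a) - 1 - (c+1) = c+2+a+b := by omega
    have h2 : c+2+b - 1 = c+1+b := by omega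
    have h3 : c+2+a - 1 = c+1+a := by omega
    have h4 : c+1-1 = c := by omega
    have h5 : c+2+b + (c+2+a) - (c+1) = c+3+a+b := by omega
    rw [h1, h2, h3, h4, h5]
    exact_mod_cast this
  · -- t = m
    have h2 : e+t-1-t = e-1 := by omega
    have h3 : e+t-t = e := by omega
    rw [h2, h3, Nat.choose_self, Nat.choose_self,
      Nat.choose_eq_zero_of_lt (show t-1 < t by omega)]
    simp
  · -- t > m
    rw [Nat.choose_eq_zero_of_lt (by omega : m-1 < t-1),
        Nat.choose_eq_zero_of_lt (by omega : m-1 < t),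
        Nat.choose_eq_zero_of_lt (by omega : e+m-1-t < e-1)]
    simp

lemma lemA (e m : ℕ) (hm : 1 ≤ m) :
    ∀ d t, t + d = e → 1 ≤ t →
    ∑ j ∈ Finset.Icc t e, (-1:ℤ)^j * (e.choose j : ℤ) * ((e+m-1-j).choose (e-1) : ℤ) =
      (-1:ℤ)^t * ((m-1).choose (t-1) : ℤ) * ((e+m-t).choose m : ℤ) := by
  intro d
  induction d with
  | zero =>
    intro t ht h1
    subst ht
    simp only [Nat.add_zero] at *
    rw [Finset.Icc_self, Finset.sum_singleton]
    rw [show t+m-1-t = m-1 from by omega, show t+m-t = m from by omega,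
      Nat.choose_self, Nat.choose_self]
    ring
  | succ d ih =>
    intro t ht h1
    have hte : t < e := by omega
    have hins : Finset.Icc t e = insert t (Finset.Icc (t+1) e) := by
      ext x; simp only [Finset.mem_Icc, Finset.mem_insert]; omega
    rw [hins, Finset.sum_insert (by simp), ih (t+1) (by omega) (by omega)]
    have hK := Knat e m t hm h1 hte
    have h2 : e+m-(t+1) = e+m-1-t := by omega
    have h3 : t+1-1 = t := by omega
    rw [h2, h3]
    have hKz : (e.choose t : ℤ) * ((e+m-1-t).choose (e-1)) =
        ((m-1).choose (t-1)) * ((e+m-t).choose m) + ((m-1).choose t) * ((e+m-1-t).choose m) := by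
      exact_mod_cast hK
    rw [pow_succ]
    linear_combination ((-1:ℤ)^t) * hKz

/-- Lemma 3.3 (case `r < m ≤ r + e`): the alternating binomial sum equals
`(-1)^(m+r) * C(e+r, m) * C(m-1, r)`. -/
theorem stmt1 (e m r : ℕ) (he : 0 < e) (h1 : r < m) (h2 : m ≤ r + e) :
    ∑ j ∈ Finset.Icc (m - r) e,
      (-1 : ℤ) ^ j * (e.choose j : ℤ) * ((e + m - 1 - j).choose (e - 1) : ℤ) =
      (-1 : ℤ) ^ (m + r) * ((e + r).choose m : ℤ) * ((m - 1).choose r : ℤ) := by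
  have hA := lemA e m (by omega) (e - (m - r)) (m - r) (by omega) (by omega)
  rw [hA, show e+m-(m-r) = e+r from by omega]
  have hsym : (m-1).choose (m-r-1) = (m-1).choose r := by
    rw [show m-r-1 = (m-1) - r from by omega]
    exact Nat.choose_symm (by omega)
  rw [hsym]
  have hsgn : (-1:ℤ)^(m+r) = (-1:ℤ)^(m-r) := by
    rw [show m+r = (m-r)+2*r from by omega, pow_add, pow_mul]
    norm_num
  rw [hsgn]
  ring
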